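/- arXiv:1905.11155 — 7 statements merged into one kernel-verified Lean document; each statement's English description precedes it below -/
import Mathlib

section
/- Let q > 1, I ∈ ℤ_{≥1}, ν = q^{-I}, and ρ ∈ (0, I). Let χ be the unique negative real number satisfying ∑_{i=1}^{I} χ/(χ - q^i) = ρ. Define π_ρ(i) = ((χ;q)_∞/(χν;q)_∞) · ((ν;q)_i/(q;q)_i) · χ^i for i ∈ {0,1,…,I}. Then π_ρ is a probability measure on {0,1,…,I}: all π_ρ(i) ≥ 0 and ∑_{i=0}^I π_ρ(i) = 1. -/
/-- The single-site stationary weight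
`π_ρ(i) = ((χ;q)_∞/(χν;q)_∞) ((ν;q)_i/(q;q)_i) χ^i`, where for `ν = q^{-I}` the
normalizing ratio `(χ;q)_∞/(χν;q)_∞` equals the finite product
`(∏_{k=0}^{I-1} (1 - ν q^k χ))⁻¹`. -/
noncomputable def statPi (q χ : ℝ) (I : ℕ) (i : ℕ) : ℝ :=
  (∏ k ∈ Finset.range I, (1 - q ^ (-(I : ℤ)) * q ^ k * χ))⁻¹ *
    ((∏ k ∈ Finset.range i, (1 - q ^ (-(I : ℤ)) * q ^ k)) /
      (∏ k ∈ Finset.range i, (1 - q * q ^ k))) * χ ^ i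

lemma qbin (q : ℝ) (hq : 1 < q) : ∀ (n : ℕ) (t : ℝ),
    ∑ i ∈ Finset.range (n + 1),
      (∏ k ∈ Finset.range i, (1 - q ^ ((k : ℤ) - n))) /
        (∏ k ∈ Finset.range i, (1 - q ^ ((k : ℤ) + 1))) * t ^ i
      = ∏ k ∈ Finset.range n, (1 - q ^ ((k : ℤ) - n) * t) := by
  intro n
  induction n with
  | zero => intro t; simp
  | succ n ih =>
    intro t
    have hq0 : (0:ℝ) < q := lt_trans one_pos hq
    have hqne : q ≠ 0 := ne_of_gt hq0
    have hDfac : ∀ k : ℕ, (1 : ℝ) - q ^ ((k:ℤ) + 1) ≠ 0 := by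
      intro k
      have : (1:ℝ) < q ^ ((k:ℤ) + 1) := one_lt_zpow₀ hq (by positivity)
      linarith
    have hDne : ∀ i : ℕ, (∏ k ∈ Finset.range i, (1 - q ^ ((k:ℤ) + 1))) ≠ 0 := by
      intro i
      exact Finset.prod_ne_zero_iff.mpr fun k _ => hDfac k
    set c : ℝ := q ^ (-(n:ℤ) - 1) with hc
    have h0exp : ((0:ℕ):ℤ) - ((n+1:ℕ):ℤ) = -(n:ℤ) - 1 := by push_cast; ring
    have hfix : ∀ u : ℝ, ∏ k ∈ Finset.range n, (1 - q ^ (((k+1:ℕ) : ℤ) - ((n+1:ℕ):ℤ)) * u)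
        = ∏ k ∈ Finset.range n, (1 - q ^ ((k : ℤ) - n) * u) := by
      intro u
      apply Finset.prod_congr rfl
      intro k _
      congr 3
      push_cast
      ring
    -- RHS recurrence
    have hRHS : ∏ k ∈ Finset.range (n+1), (1 - q ^ ((k : ℤ) - (n+1:ℕ)) * t)
        = (∑ i ∈ Finset.range (n + 1),
      (∏ k ∈ Finset.range i, (1 - q ^ ((k : ℤ) - n))) /
        (∏ k ∈ Finset.range i, (1 - q ^ ((k : ℤ) + 1))) * t ^ i) * (1 - c * t) := by
      rw [Finset.prod_range_succ', hfix t, h0exp, ← ih t]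
    rw [hRHS]
    -- key coefficient identity
    have key : ∀ i : ℕ,
        (∏ k ∈ Finset.range (i+1), (1 - q ^ ((k : ℤ) - (n+1:ℕ)))) /
          (∏ k ∈ Finset.range (i+1), (1 - q ^ ((k : ℤ) + 1)))
        = (∏ k ∈ Finset.range (i+1), (1 - q ^ ((k : ℤ) - n))) /
            (∏ k ∈ Finset.range (i+1), (1 - q ^ ((k : ℤ) + 1)))
          - c * ((∏ k ∈ Finset.range i, (1 - q ^ ((k : ℤ) - n))) /
              (∏ k ∈ Finset.range i, (1 - q ^ ((k : ℤ) + 1)))) := by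
      intro i
      have hN1 : (∏ k ∈ Finset.range (i+1), (1 - q ^ ((k : ℤ) - (n+1:ℕ))))
          = (1 - c) * ∏ k ∈ Finset.range i, (1 - q ^ ((k : ℤ) - n)) := by
        rw [Finset.prod_range_succ', h0exp, mul_comm]
        congr 1
        apply Finset.prod_congr rfl
        intro k _
        congr 2
        push_cast
        ring
      have hN2 : (∏ k ∈ Finset.range (i+1), (1 - q ^ ((k : ℤ) - n)))
          = (∏ k ∈ Finset.range i, (1 - q ^ ((k : ℤ) - n))) * (1 - q ^ ((i : ℤ) - n)) :=
        Finset.prod_range_succ _ _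
      have hD2 : (∏ k ∈ Finset.range (i+1), (1 - q ^ ((k : ℤ) + 1)))
          = (∏ k ∈ Finset.range i, (1 - q ^ ((k : ℤ) + 1))) * (1 - q ^ ((i : ℤ) + 1)) :=
        Finset.prod_range_succ _ _
      have hcq : c * q ^ ((i:ℤ) + 1) = q ^ ((i:ℤ) - n) := by
        rw [hc, ← zpow_add₀ hqne]
        ring_nf
      have hscalar : (1 : ℝ) - c = (1 - q ^ ((i:ℤ) - n)) - c * (1 - q ^ ((i:ℤ) + 1)) := by
        linear_combination (-1 : ℝ) * hcq
      rw [hN1, hN2, hD2, hscalar]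
      have h1 := hDne i
      have h2 := hDfac i
      field_simp
    -- top coefficient vanishes
    have htop : (∏ k ∈ Finset.range (n+1), (1 - q ^ ((k : ℤ) - n))) = 0 := by
      apply Finset.prod_eq_zero (Finset.self_mem_range_succ n)
      simp
    have hext : (∑ i ∈ Finset.range (n + 2),
        (∏ k ∈ Finset.range i, (1 - q ^ ((k : ℤ) - n))) /
          (∏ k ∈ Finset.range i, (1 - q ^ ((k : ℤ) + 1))) * t ^ i)
        = ∑ i ∈ Finset.range (n + 1),
        (∏ k ∈ Finset.range i, (1 - q ^ ((k : ℤ) - n))) /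
          (∏ k ∈ Finset.range i, (1 - q ^ ((k : ℤ) + 1))) * t ^ i := by
      rw [Finset.sum_range_succ, htop]
      simp
    have hsplit : (∑ i ∈ Finset.range (n + 1),
        (∏ k ∈ Finset.range i, (1 - q ^ ((k : ℤ) - n))) /
          (∏ k ∈ Finset.range i, (1 - q ^ ((k : ℤ) + 1))) * t ^ i) * (1 - c * t)
        = ((∑ i ∈ Finset.range (n + 1),
        (∏ k ∈ Finset.range (i+1), (1 - q ^ ((k : ℤ) - n))) /
          (∏ k ∈ Finset.range (i+1), (1 - q ^ ((k : ℤ) + 1))) * t ^ (i+1)) + 1)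
        - ∑ i ∈ Finset.range (n + 1),
            c * ((∏ k ∈ Finset.range i, (1 - q ^ ((k : ℤ) - n))) /
              (∏ k ∈ Finset.range i, (1 - q ^ ((k : ℤ) + 1)))) * t ^ (i+1) := by
      rw [mul_sub, mul_one]
      congr 1
      · rw [← hext, Finset.sum_range_succ']
        simp
      · rw [Finset.sum_mul]
        apply Finset.sum_congr rfl
        intro i _
        ring
    rw [hsplit, Finset.sum_range_succ']
    simp only [Finset.range_zero, Finset.prod_empty, pow_zero, mul_one, div_one]
    have hterm : ∀ i ∈ Finset.range (n+1),
        (∏ k ∈ Finset.range (i+1), (1 - q ^ ((k : ℤ) - (n+1:ℕ)))) /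
          (∏ k ∈ Finset.range (i+1), (1 - q ^ ((k : ℤ) + 1))) * t ^ (i+1)
        = (∏ k ∈ Finset.range (i+1), (1 - q ^ ((k : ℤ) - n))) /
            (∏ k ∈ Finset.range (i+1), (1 - q ^ ((k : ℤ) + 1))) * t ^ (i+1)
          - c * ((∏ k ∈ Finset.range i, (1 - q ^ ((k : ℤ) - n))) /
              (∏ k ∈ Finset.range i, (1 - q ^ ((k : ℤ) + 1)))) * t ^ (i+1) := by
      intro i _
      rw [key i]
      ring
    rw [Finset.sum_congr rfl hterm, Finset.sum_sub_distrib]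
    ring

/-- **π_ρ is a probability measure on {0,1,…,I}** (Lemma B.2 of the paper, first part).
Let `q > 1`, `I ≥ 1`, `ν = q^{-I}`, `ρ ∈ (0, I)`, and let `χ` be the (unique) negative real
satisfying `∑_{i=1}^{I} χ/(χ - qⁱ) = ρ`. Then all weights `π_ρ(i)` are nonnegative and they
sum to one. -/
theorem statPi_isProbability (I : ℕ) (hI : 1 ≤ I) (q ρ χ : ℝ) (hq : 1 < q)
    (hρ0 : 0 < ρ) (hρI : ρ < I) (hχ : χ < 0)
    (hχeq : ∑ i ∈ Finset.Icc 1 I, χ / (χ - q ^ i) = ρ) :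
    (∀ i ∈ Finset.range (I + 1), 0 ≤ statPi q χ I i) ∧
      ∑ i ∈ Finset.range (I + 1), statPi q χ I i = 1 := by
  have hq0 : (0:ℝ) < q := lt_trans one_pos hq
  have hqne : q ≠ 0 := ne_of_gt hq0
  have hpow1 : ∀ k : ℕ, q ^ (-(I:ℤ)) * q ^ k = q ^ ((k:ℤ) - I) := by
    intro k
    rw [← zpow_natCast q k, ← zpow_add₀ hqne]
    ring_nf
  have hpow2 : ∀ k : ℕ, q * q ^ k = q ^ ((k:ℤ) + 1) := by
    intro k
    have h : q ^ ((k:ℤ) + 1) = q ^ (k + 1 : ℕ) := by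
      rw [show ((k:ℤ)+1) = ((k+1:ℕ):ℤ) by push_cast; ring, zpow_natCast]
    rw [h, pow_succ']
  have hform : ∀ i : ℕ, statPi q χ I i =
      (∏ k ∈ Finset.range I, (1 - q ^ ((k:ℤ) - I) * χ))⁻¹ *
        ((∏ k ∈ Finset.range i, (1 - q ^ ((k:ℤ) - I))) /
          (∏ k ∈ Finset.range i, (1 - q ^ ((k:ℤ) + 1))) * χ ^ i) := by
    intro i
    unfold statPi
    simp only [hpow1, hpow2]
    ring
  have hP : 0 < ∏ k ∈ Finset.range I, (1 - q ^ ((k:ℤ) - I) * χ) := by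
    apply Finset.prod_pos
    intro k _
    have h1 : 0 < q ^ ((k:ℤ) - I) := zpow_pos hq0 _
    nlinarith
  have hE : ∀ i : ℕ, 0 < ∏ k ∈ Finset.range i, (q ^ ((k:ℤ) + 1) - 1) := by
    intro i
    apply Finset.prod_pos
    intro k _
    have : (1:ℝ) < q ^ ((k:ℤ) + 1) := one_lt_zpow₀ hq (by positivity)
    linarith
  have hDE : ∀ i : ℕ, (∏ k ∈ Finset.range i, (1 - q ^ ((k:ℤ) + 1)))
      = (-1:ℝ)^i * ∏ k ∈ Finset.range i, (q ^ ((k:ℤ) + 1) - 1) := by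
    intro i
    calc (∏ k ∈ Finset.range i, (1 - q ^ ((k:ℤ) + 1)))
        = ∏ k ∈ Finset.range i, ((-1) * (q ^ ((k:ℤ) + 1) - 1)) := by
          apply Finset.prod_congr rfl; intro k _; ring
      _ = (∏ _k ∈ Finset.range i, (-1:ℝ)) * ∏ k ∈ Finset.range i, (q ^ ((k:ℤ) + 1) - 1) :=
          Finset.prod_mul_distrib
      _ = (-1:ℝ)^i * ∏ k ∈ Finset.range i, (q ^ ((k:ℤ) + 1) - 1) := by
          rw [Finset.prod_const, Finset.card_range]
  have hχpow : ∀ i : ℕ, χ ^ i = (-1:ℝ)^i * (-χ)^i := by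
    intro i
    rw [← mul_pow, neg_one_mul, neg_neg]
  have hratio : ∀ i : ℕ,
      (∏ k ∈ Finset.range i, (1 - q ^ ((k:ℤ) - I))) /
          (∏ k ∈ Finset.range i, (1 - q ^ ((k:ℤ) + 1))) * χ ^ i
      = (∏ k ∈ Finset.range i, (1 - q ^ ((k:ℤ) - I))) * (-χ)^i /
          (∏ k ∈ Finset.range i, (q ^ ((k:ℤ) + 1) - 1)) := by
    intro i
    rw [hDE i, hχpow i]
    have h1 : ((-1:ℝ)^i) ≠ 0 := by
      apply pow_ne_zero; norm_num
    have h2 : (∏ k ∈ Finset.range i, (q ^ ((k:ℤ) + 1) - 1)) ≠ 0 := ne_of_gt (hE i)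
    field_simp
  constructor
  · intro i hi
    rw [hform i, hratio i]
    apply mul_nonneg (inv_nonneg.mpr hP.le)
    apply div_nonneg _ (hE i).le
    apply mul_nonneg _ (pow_nonneg (by linarith) i)
    apply Finset.prod_nonneg
    intro k hk
    have hk' : (k:ℤ) - I < 0 := by
      have : k < I := lt_of_lt_of_le (Finset.mem_range.mp hk) (by
        have := Finset.mem_range.mp hi; omega)
      omega
    have : q ^ ((k:ℤ) - I) < 1 := zpow_lt_one_of_neg₀ hq hk'
    linarith
  · have := qbin q hq I χ
    calc ∑ i ∈ Finset.range (I + 1), statPi q χ I i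
        = ∑ i ∈ Finset.range (I + 1),
            (∏ k ∈ Finset.range I, (1 - q ^ ((k:ℤ) - I) * χ))⁻¹ *
              ((∏ k ∈ Finset.range i, (1 - q ^ ((k:ℤ) - I))) /
                (∏ k ∈ Finset.range i, (1 - q ^ ((k:ℤ) + 1))) * χ ^ i) :=
          Finset.sum_congr rfl fun i _ => hform i
      _ = (∏ k ∈ Finset.range I, (1 - q ^ ((k:ℤ) - I) * χ))⁻¹ *
            ∑ i ∈ Finset.range (I + 1),
              (∏ k ∈ Finset.range i, (1 - q ^ ((k:ℤ) - I))) /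
                (∏ k ∈ Finset.range i, (1 - q ^ ((k:ℤ) + 1))) * χ ^ i :=
          (Finset.mul_sum _ _ _).symm
      _ = 1 := by rw [this, inv_mul_cancel₀ (ne_of_gt hP)]
end

section
/- With the notation and assumptions of the stationary measure π_ρ (q > 1, ν = q^{-I}, ρ ∈ (0,I), χ the unique negative solution of ∑_{i=1}^I χ/(χ - q^i) = ρ), the mean of π_ρ equals ρ and the variance of π_ρ equals ρ - ∑_{i=1}^I χ²/(q^i - χ)². -/
/-!
By the terminating q-binomial theorem, the generating function `∑ᵢ π(i) zⁱ` is
`∏_{k<I} (1 - ν qᵏ χ z) / (1 - ν qᵏ χ) = ∏_{j=1}^{I} (1 - pⱼ + pⱼ z)`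
with `pⱼ = χ / (χ - qʲ)`. So `π_ρ` is a Poisson binomial law: the law of a sum of
independent Bernoulli(`pⱼ`) variables, whose mean is `∑ pⱼ = ρ` and whose variance is
`∑ pⱼ (1 - pⱼ)`. Both moments are read off at `z = 1` from the generating function after
applying the Euler operator `θ = X d/dX`, a derivation.
-/

open Finset Polynomial

def qPochhammer {R : Type*} [CommRing R] (a q : R) (n : ℕ) : R :=
  ∏ k ∈ range n, (1 - a * q ^ k)

section QPochhammer

variable {R : Type*} [CommRing R]

theorem qPochhammer_zero (a q : R) : qPochhammer a q 0 = 1 := prod_range_zero _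

theorem qPochhammer_succ (a q : R) (n : ℕ) :
    qPochhammer a q (n + 1) = qPochhammer a q n * (1 - a * q ^ n) :=
  prod_range_succ _ _

theorem qPochhammer_succ' (a q : R) (n : ℕ) :
    qPochhammer a q (n + 1) = (1 - a) * qPochhammer (a * q) q n := by
  rw [qPochhammer, prod_range_succ', mul_comm]
  simp only [qPochhammer, pow_succ', pow_zero, mul_one, mul_assoc]

end QPochhammer

section QBinomial

variable {K : Type*} [Field K] {q : K}

theorem qPochhammer_self_ne_zero (hq : ∀ k, q ^ (k + 1) ≠ 1) (n : ℕ) :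
    qPochhammer q q n ≠ 0 :=
  prod_ne_zero_iff.2 fun k _ => by rw [← pow_succ', sub_ne_zero]; exact (hq k).symm

-- the q-Pascal rule
theorem qPochhammer_div_succ (hq : ∀ k, q ^ (k + 1) ≠ 1) (a : K) (i : ℕ) :
    qPochhammer a q (i + 1) / qPochhammer q q (i + 1) =
      qPochhammer (a * q) q (i + 1) / qPochhammer q q (i + 1) -
        a * (qPochhammer (a * q) q i / qPochhammer q q i) := by
  have h₁ := qPochhammer_self_ne_zero hq i
  have h₂ : 1 - q * q ^ i ≠ 0 := by rw [← pow_succ', sub_ne_zero]; exact (hq i).symm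
  rw [qPochhammer_succ' a, qPochhammer_succ (a * q), qPochhammer_succ q]
  field_simp
  ring

theorem sum_range_qPochhammer_div_mul_pow (hq : ∀ k, q ^ (k + 1) ≠ 1) {n : ℕ} {a : K}
    (ha : a * q ^ n = 1) (t : K) :
    ∑ i ∈ range (n + 1), qPochhammer a q i / qPochhammer q q i * t ^ i =
      qPochhammer (a * t) q n := by
  induction n generalizing a with
  | zero => simp [qPochhammer_zero]
  | succ n ih =>
    have haq : a * q * q ^ n = 1 := by rw [mul_assoc, ← pow_succ']; exact ha
    set b : ℕ → K := fun i => qPochhammer (a * q) q i / qPochhammer q q i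
    have hb_top : b (n + 1) = 0 := by
      simp only [b, qPochhammer_succ (a * q), haq, sub_self, mul_zero, zero_div]
    have hshift : ∑ i ∈ range (n + 1), b (i + 1) * t ^ (i + 1) =
        ∑ i ∈ range (n + 1), b i * t ^ i - 1 := by
      have h := sum_range_succ' (fun i => b i * t ^ i) (n + 1)
      rw [sum_range_succ, hb_top] at h
      simp only [b, qPochhammer_zero, div_one, pow_zero, mul_one, zero_mul, add_zero] at h
      linear_combination -h
    calc ∑ i ∈ range (n + 1 + 1), qPochhammer a q i / qPochhammer q q i * t ^ i
        = ∑ i ∈ range (n + 1), (b (i + 1) - a * b i) * t ^ (i + 1) + 1 := by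
          rw [sum_range_succ']
          simp only [qPochhammer_div_succ hq a, qPochhammer_zero, div_one, pow_zero, mul_one, b]
      _ = (1 - a * t) * ∑ i ∈ range (n + 1), b i * t ^ i := by
          have hsplit : ∑ i ∈ range (n + 1), (b (i + 1) - a * b i) * t ^ (i + 1) =
              ∑ i ∈ range (n + 1), b (i + 1) * t ^ (i + 1) -
                a * t * ∑ i ∈ range (n + 1), b i * t ^ i := by
            rw [mul_sum, ← sum_sub_distrib]
            exact sum_congr rfl fun i _ => by ring
          rw [hsplit, hshift]
          ring
      _ = qPochhammer (a * t) q (n + 1) := by rw [ih haq, qPochhammer_succ', mul_right_comm]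

end QBinomial

namespace Polynomial

variable {R : Type*} [CommRing R]

noncomputable def eulerOp (P : R[X]) : R[X] := X * derivative P

theorem coeff_eulerOp (P : R[X]) (n : ℕ) : (eulerOp P).coeff n = n * P.coeff n := by
  cases n with
  | zero => simp [eulerOp]
  | succ n => rw [eulerOp, coeff_X_mul, coeff_derivative, mul_comm]; push_cast; ring

theorem eulerOp_add (P Q : R[X]) : eulerOp (P + Q) = eulerOp P + eulerOp Q := by
  simp only [eulerOp, derivative_add, mul_add]

theorem eulerOp_mul (P Q : R[X]) : eulerOp (P * Q) = eulerOp P * Q + P * eulerOp Q := by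
  simp only [eulerOp, derivative_mul]
  ring

theorem natDegree_eulerOp_le (P : R[X]) : (eulerOp P).natDegree ≤ P.natDegree :=
  natDegree_le_iff_coeff_eq_zero.2 fun n hn => by
    rw [coeff_eulerOp, coeff_eq_zero_of_natDegree_lt hn, mul_zero]

theorem sum_range_coeff_eq_eval_one {P : R[X]} {N : ℕ} (h : P.natDegree < N) :
    ∑ i ∈ range N, P.coeff i = P.eval 1 := by
  simp [eval_eq_sum_range' h]

theorem sum_range_natCast_mul_coeff {P : R[X]} {N : ℕ} (h : P.natDegree < N) :
    ∑ i ∈ range N, (i : R) * P.coeff i = (eulerOp P).eval 1 := by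
  simp only [← coeff_eulerOp]
  exact sum_range_coeff_eq_eval_one ((natDegree_eulerOp_le P).trans_lt h)

noncomputable def poissonBinomialPGF {ι : Type*} (s : Finset ι) (p : ι → R) : R[X] :=
  ∏ k ∈ s, (C (1 - p k) + C (p k) * X)

variable {ι : Type*} (p : ι → R)

theorem eval_poissonBinomialPGF (s : Finset ι) (z : R) :
    (poissonBinomialPGF s p).eval z = ∏ k ∈ s, (1 - p k + p k * z) := by
  simp [poissonBinomialPGF, eval_prod]

theorem natDegree_poissonBinomialPGF_le (s : Finset ι) :
    (poissonBinomialPGF s p).natDegree ≤ s.card := by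
  refine (natDegree_prod_le _ _).trans ?_
  rw [card_eq_sum_ones]
  exact sum_le_sum fun k _ => by
    rw [natDegree_C_add]; exact natDegree_C_mul_le _ _ |>.trans natDegree_X_le

theorem eulerOp_C_mul_X (a : R) : eulerOp (C a * X) = C a * X := by
  simp [eulerOp]

theorem eulerOp_bernoulli (a : R) : eulerOp (C (1 - a) + C a * X) = C a * X := by
  simp [eulerOp]

theorem eval_one_poissonBinomialPGF (s : Finset ι) : (poissonBinomialPGF s p).eval 1 = 1 := by
  simp [eval_poissonBinomialPGF]

theorem eval_one_eulerOp_poissonBinomialPGF (s : Finset ι) :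
    (eulerOp (poissonBinomialPGF s p)).eval 1 = ∑ k ∈ s, p k := by
  induction s using Finset.cons_induction with
  | empty => simp [poissonBinomialPGF, eulerOp]
  | cons k s hk ih =>
    rw [poissonBinomialPGF, prod_cons, mul_comm, ← poissonBinomialPGF, eulerOp_mul,
      eulerOp_bernoulli]
    simp [ih, eval_one_poissonBinomialPGF, add_comm]

theorem eval_one_eulerOp_eulerOp_poissonBinomialPGF (s : Finset ι) :
    (eulerOp (eulerOp (poissonBinomialPGF s p))).eval 1 =
      (∑ k ∈ s, p k) ^ 2 + ∑ k ∈ s, p k * (1 - p k) := by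
  induction s using Finset.cons_induction with
  | empty => simp [poissonBinomialPGF, eulerOp]
  | cons k s hk ih =>
    rw [poissonBinomialPGF, prod_cons, mul_comm, ← poissonBinomialPGF, eulerOp_mul,
      eulerOp_bernoulli, eulerOp_add, eulerOp_mul, eulerOp_mul, eulerOp_bernoulli, eulerOp_C_mul_X]
    simp only [eval_add, eval_mul, eval_C, eval_X, eval_one_poissonBinomialPGF,
      eval_one_eulerOp_poissonBinomialPGF, ih, sum_cons, mul_one, one_mul, sub_add_cancel]
    ring

theorem sum_range_natCast_mul_coeff_poissonBinomialPGF {s : Finset ι} {N : ℕ} (h : s.card < N) :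
    ∑ i ∈ range N, (i : R) * (poissonBinomialPGF s p).coeff i = ∑ k ∈ s, p k := by
  rw [sum_range_natCast_mul_coeff ((natDegree_poissonBinomialPGF_le p s).trans_lt h),
    eval_one_eulerOp_poissonBinomialPGF]

theorem sum_range_sub_sq_mul_coeff_poissonBinomialPGF {s : Finset ι} {N : ℕ} (h : s.card < N) :
    ∑ i ∈ range N, ((i : R) - ∑ k ∈ s, p k) ^ 2 * (poissonBinomialPGF s p).coeff i =
      ∑ k ∈ s, p k * (1 - p k) := by
  have hdeg := (natDegree_poissonBinomialPGF_le p s).trans_lt h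
  have h₀ := sum_range_coeff_eq_eval_one hdeg
  have h₁ := sum_range_natCast_mul_coeff hdeg
  have h₂ := sum_range_natCast_mul_coeff ((natDegree_eulerOp_le _).trans_lt hdeg)
  simp only [coeff_eulerOp, ← mul_assoc] at h₂
  rw [eval_one_poissonBinomialPGF] at h₀
  rw [eval_one_eulerOp_poissonBinomialPGF] at h₁
  rw [eval_one_eulerOp_eulerOp_poissonBinomialPGF] at h₂
  set m := ∑ k ∈ s, p k
  calc ∑ i ∈ range N, ((i : R) - m) ^ 2 * (poissonBinomialPGF s p).coeff i
      = ∑ i ∈ range N, (i : R) * i * (poissonBinomialPGF s p).coeff i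
        - 2 * m * ∑ i ∈ range N, (i : R) * (poissonBinomialPGF s p).coeff i
        + m ^ 2 * ∑ i ∈ range N, (poissonBinomialPGF s p).coeff i := by
        simp only [mul_sum, ← sum_sub_distrib, ← sum_add_distrib]
        exact sum_congr rfl fun i _ => by ring
    _ = ∑ k ∈ s, p k * (1 - p k) := by rw [h₀, h₁, h₂]; ring

end Polynomial

section StatPi

variable {q χ : ℝ}

theorem statPi_eq_qPochhammer (q χ : ℝ) (I i : ℕ) :
    statPi q χ I i = qPochhammer (q ^ (-(I : ℤ))) q i / qPochhammer q q i * χ ^ i /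
      qPochhammer (q ^ (-(I : ℤ)) * χ) q I := by
  simp only [statPi, qPochhammer, mul_right_comm _ χ]
  ring

theorem sum_range_statPi_mul_pow (hq : 1 < q) (hχ : χ < 0) (I : ℕ) (z : ℝ) :
    ∑ i ∈ range (I + 1), statPi q χ I i * z ^ i =
      ∏ j ∈ Icc 1 I, (1 - χ / (χ - q ^ j) + χ / (χ - q ^ j) * z) := by
  have hq₀ : q ≠ 0 := by positivity
  set a : ℝ := q ^ (-(I : ℤ))
  have ha : a * q ^ I = 1 := by
    simp only [a, zpow_neg, zpow_natCast]
    exact inv_mul_cancel₀ (pow_ne_zero _ hq₀)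
  have hqpow : ∀ k, q ^ (k + 1) ≠ 1 := fun k => (one_lt_pow₀ hq k.succ_ne_zero).ne'
  have hfactor : ∀ k ∈ range I, (1 - a * (χ * z) * q ^ k) / (1 - a * χ * q ^ k) =
      1 - χ / (χ - q ^ (I - k)) + χ / (χ - q ^ (I - k)) * z := by
    intro k hk
    have hQ : 0 < q ^ (I - k) := by positivity
    have haq : a * q ^ k = (q ^ (I - k))⁻¹ := eq_inv_of_mul_eq_one_left <| by
      rw [mul_assoc, ← pow_add, Nat.add_sub_cancel' (mem_range.1 hk).le, ha]
    have hχQ : χ - q ^ (I - k) ≠ 0 := by linarith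
    have hQχ : q ^ (I - k) - χ ≠ 0 := by linarith
    rw [mul_right_comm a (χ * z), mul_right_comm a χ, haq]
    field_simp
    ring
  calc ∑ i ∈ range (I + 1), statPi q χ I i * z ^ i
      = (∑ i ∈ range (I + 1), qPochhammer a q i / qPochhammer q q i * (χ * z) ^ i) /
          qPochhammer (a * χ) q I := by
        rw [sum_div]
        exact sum_congr rfl fun i _ => by rw [statPi_eq_qPochhammer, mul_pow]; ring
    _ = ∏ k ∈ range I, (1 - a * (χ * z) * q ^ k) / (1 - a * χ * q ^ k) := by
        rw [sum_range_qPochhammer_div_mul_pow hqpow ha, qPochhammer, qPochhammer, prod_div_distrib]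
    _ = ∏ k ∈ range I, (1 - χ / (χ - q ^ (I - k)) + χ / (χ - q ^ (I - k)) * z) :=
        prod_congr rfl hfactor
    _ = ∏ j ∈ Icc 1 I, (1 - χ / (χ - q ^ j) + χ / (χ - q ^ j) * z) := by
        rw [range_eq_Ico,
          prod_Ico_reflect (fun j => 1 - χ / (χ - q ^ j) + χ / (χ - q ^ j) * z) 0 (Nat.le_succ I),
          Nat.add_sub_cancel_left, Nat.sub_zero, Ico_add_one_right_eq_Icc]

theorem statPi_eq_coeff_poissonBinomialPGF (hq : 1 < q) (hχ : χ < 0) {I i : ℕ}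
    (hi : i < I + 1) :
    statPi q χ I i = (poissonBinomialPGF (Icc 1 I) fun j => χ / (χ - q ^ j)).coeff i := by
  have hpoly : ∑ i ∈ range (I + 1), C (statPi q χ I i) * X ^ i =
      poissonBinomialPGF (Icc 1 I) fun j => χ / (χ - q ^ j) :=
    Polynomial.funext fun z => by
      simp [eval_finsetSum, eval_poissonBinomialPGF, sum_range_statPi_mul_pow hq hχ]
  rw [← hpoly, finsetSum_coeff]
  simp [hi]

end StatPi

theorem statPi_mean_variance_general (I : ℕ) (q ρ χ : ℝ) (hq : 1 < q) (hχ : χ < 0)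
    (hχeq : ∑ i ∈ Finset.Icc 1 I, χ / (χ - q ^ i) = ρ) :
    (∑ i ∈ Finset.range (I + 1), (i : ℝ) * statPi q χ I i = ρ) ∧
      ∑ i ∈ Finset.range (I + 1), ((i : ℝ) - ρ) ^ 2 * statPi q χ I i
        = ρ - ∑ i ∈ Finset.Icc 1 I, χ ^ 2 / (q ^ i - χ) ^ 2 := by
  have hcard : (Icc 1 I).card < I + 1 := by simp
  have hπ : ∀ i ∈ range (I + 1), statPi q χ I i =
      (poissonBinomialPGF (Icc 1 I) fun j => χ / (χ - q ^ j)).coeff i :=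
    fun i hi => statPi_eq_coeff_poissonBinomialPGF hq hχ (mem_range.1 hi)
  subst hχeq
  constructor
  · rw [sum_congr rfl fun i hi => by rw [hπ i hi],
      sum_range_natCast_mul_coeff_poissonBinomialPGF _ hcard]
  · rw [sum_congr rfl fun i hi => by rw [hπ i hi],
      sum_range_sub_sq_mul_coeff_poissonBinomialPGF _ hcard, ← sum_sub_distrib]
    refine sum_congr rfl fun j _ => ?_
    rw [show (q ^ j - χ) ^ 2 = (χ - q ^ j) ^ 2 by ring, ← div_pow]
    ring

/-- **Mean and variance of the stationary measure π_ρ** (Lemma B.2 of the paper).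
With `q > 1`, `ν = q^{-I}`, `ρ ∈ (0, I)` and `χ < 0` the unique negative solution of
`∑_{i=1}^{I} χ/(χ - qⁱ) = ρ`, the measure `π_ρ` has mean `ρ` and variance
`ρ - ∑_{i=1}^{I} χ²/(qⁱ - χ)²`. -/
theorem statPi_mean_variance (I : ℕ) (hI : 1 ≤ I) (q ρ χ : ℝ) (hq : 1 < q)
    (hρ0 : 0 < ρ) (hρI : ρ < I) (hχ : χ < 0)
    (hχeq : ∑ i ∈ Finset.Icc 1 I, χ / (χ - q ^ i) = ρ) :
    (∑ i ∈ Finset.range (I + 1), (i : ℝ) * statPi q χ I i = ρ) ∧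
      ∑ i ∈ Finset.range (I + 1), ((i : ℝ) - ρ) ^ 2 * statPi q χ I i
        = ρ - ∑ i ∈ Finset.Icc 1 I, χ ^ 2 / (q ^ i - χ) ^ 2 :=
  statPi_mean_variance_general I q ρ χ hq hχ hχeq
end

section
/- Let I ∈ ℤ_{≥1}, ρ ∈ (0, I). For ε > 0 let q_ε = e^{√ε} and let χ_ε be the unique negative real solution of ∑_{i=1}^I χ/(χ - q_ε^i) = ρ. Then lim_{ε ↓ 0} χ_ε = ρ/(ρ - I), and consequently lim_{ε ↓ 0} (ρ - ∑_{i=1}^I χ_ε²/(q_ε^i - χ_ε)²) = ρ(I - ρ)/I. -/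
/-!
Since `χ < 0`, each term `χ / (χ - qⁱ)` decreases in `qⁱ`, and `q ≤ qⁱ ≤ q^I` for `q ≥ 1`;
comparing the defining equation with `I` copies of its smallest and of its largest term traps
`χ` between `ρ q^I / (ρ - I)` and `ρ q / (ρ - I)`. Both bounds tend to `ρ / (ρ - I)` as
`q = e^{√ε} → 1`, and the variance then converges termwise to `ρ - I χ₀² / (1 - χ₀)²` with
`χ₀ = ρ / (ρ - I)`.
-/

open Filter Topology Finset

lemma div_sub_le_div_sub_of_neg {c s t : ℝ} (hc : c < 0) (hs : 0 < s) (hst : s ≤ t) :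
    c / (c - t) ≤ c / (c - s) := by
  rw [← neg_div_neg_eq c, ← neg_div_neg_eq c (c - s), neg_sub, neg_sub]
  exact div_le_div_of_nonneg_left (by linarith) (by linarith) (by linarith)

lemma mem_Icc_of_sum_div_sub_pow_eq {I : ℕ} {ρ q c : ℝ} (hρI : ρ < I) (hq : 1 ≤ q)
    (hc : c < 0) (heq : ∑ i ∈ Icc 1 I, c / (c - q ^ i) = ρ) :
    c ∈ Set.Icc (ρ / (ρ - I) * q ^ I) (ρ / (ρ - I) * q) := by
  have hcard : #(Icc 1 I) = I := by simp
  have hpow_pos : ∀ i, 0 < q ^ i := fun i => pow_pos (by linarith) i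
  have hlower : #(Icc 1 I) • (c / (c - q ^ I)) ≤ ρ := by
    rw [← heq]
    refine card_nsmul_le_sum _ _ _ fun i hi => div_sub_le_div_sub_of_neg hc (hpow_pos i) ?_
    exact pow_le_pow_right₀ hq (mem_Icc.1 hi).2
  have hupper : ρ ≤ #(Icc 1 I) • (c / (c - q)) := by
    rw [← heq]
    refine sum_le_card_nsmul _ _ _ fun i hi => div_sub_le_div_sub_of_neg hc (by linarith) ?_
    exact le_self_pow₀ hq (by linarith [(mem_Icc.1 hi).1])
  rw [hcard, nsmul_eq_mul, mul_div_assoc', div_le_iff_of_neg (by linarith [hpow_pos I])] at hlower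
  rw [hcard, nsmul_eq_mul, mul_div_assoc', le_div_iff_of_neg (by linarith)] at hupper
  constructor
  · rw [div_mul_eq_mul_div, div_le_iff_of_neg (by linarith)]
    linarith
  · rw [div_mul_eq_mul_div, le_div_iff_of_neg (by linarith)]
    linarith

theorem tendsto_of_sum_div_sub_pow_eq {α : Type*} {l : Filter α} {I : ℕ} {ρ : ℝ} (hρI : ρ < I)
    {q χ : α → ℝ} (hq : Tendsto q l (𝓝 1)) (hq_one : ∀ᶠ a in l, 1 ≤ q a)
    (hχ : ∀ᶠ a in l, χ a < 0) (heq : ∀ᶠ a in l, ∑ i ∈ Icc 1 I, χ a / (χ a - q a ^ i) = ρ) :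
    Tendsto χ l (𝓝 (ρ / (ρ - I))) := by
  have hbounds : ∀ᶠ a in l, χ a ∈ Set.Icc (ρ / (ρ - I) * q a ^ I) (ρ / (ρ - I) * q a) := by
    filter_upwards [hq_one, hχ, heq] with a h1 h2 h3
    exact mem_Icc_of_sum_div_sub_pow_eq hρI h1 h2 h3
  have hlower := (hq.pow I).const_mul (ρ / (ρ - I))
  have hupper := hq.const_mul (ρ / (ρ - I))
  rw [one_pow, mul_one] at hlower
  rw [mul_one] at hupper
  exact tendsto_of_tendsto_of_tendsto_of_le_of_le' hlower hupper
    (hbounds.mono fun _ h => h.1) (hbounds.mono fun _ h => h.2)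

theorem tendsto_sum_sq_div_sub_pow_sq {α : Type*} {l : Filter α} (I : ℕ) {q χ : α → ℝ}
    {χ₀ : ℝ} (hq : Tendsto q l (𝓝 1)) (hχ : Tendsto χ l (𝓝 χ₀)) (hχ₀ : χ₀ ≠ 1) :
    Tendsto (fun a => ∑ i ∈ Icc 1 I, χ a ^ 2 / (q a ^ i - χ a) ^ 2) l
      (𝓝 (I * (χ₀ ^ 2 / (1 - χ₀) ^ 2))) := by
  have hterm : ∀ i : ℕ, Tendsto (fun a => χ a ^ 2 / (q a ^ i - χ a) ^ 2) l
      (𝓝 (χ₀ ^ 2 / (1 - χ₀) ^ 2)) := fun i => by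
    have h := (hχ.pow 2).div (((hq.pow i).sub hχ).pow 2)
      (pow_ne_zero 2 (by rw [one_pow]; exact sub_ne_zero.2 hχ₀.symm))
    rwa [one_pow] at h
  simpa using tendsto_finsetSum (Icc 1 I) fun i _ => hterm i

theorem limit_chi_and_variance_general (I : ℕ) (hI : 1 ≤ I) (ρ : ℝ) (hρI : ρ < I)
    (χ : ℝ → ℝ) (hχneg : ∀ ε : ℝ, 0 < ε → χ ε < 0)
    (hχeq : ∀ ε : ℝ, 0 < ε →
      ∑ i ∈ Finset.Icc 1 I, χ ε / (χ ε - Real.exp (Real.sqrt ε) ^ i) = ρ) :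
    Tendsto χ (nhdsWithin 0 (Set.Ioi 0)) (nhds (ρ / (ρ - I))) ∧
      Tendsto (fun ε : ℝ =>
          ρ - ∑ i ∈ Finset.Icc 1 I, (χ ε) ^ 2 / (Real.exp (Real.sqrt ε) ^ i - χ ε) ^ 2)
        (nhdsWithin 0 (Set.Ioi 0)) (nhds (ρ * ((I : ℝ) - ρ) / I)) := by
  have hq : Tendsto (fun ε => Real.exp (Real.sqrt ε)) (𝓝[>] 0) (𝓝 1) := by
    refine (Continuous.tendsto' ?_ 0 1 ?_).mono_left nhdsWithin_le_nhds
    · fun_prop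
    · simp
  have hχ := tendsto_of_sum_div_sub_pow_eq hρI hq
    (Eventually.of_forall fun ε => Real.one_le_exp (Real.sqrt_nonneg ε))
    (eventually_mem_nhdsWithin.mono hχneg) (eventually_mem_nhdsWithin.mono hχeq)
  have hI₀ : (I : ℝ) ≠ 0 := Nat.cast_ne_zero.2 (by omega)
  have hρI₀ : ρ - I ≠ 0 := sub_ne_zero.2 hρI.ne
  have hχ₀ : ρ / (ρ - I) ≠ 1 := by
    rw [Ne, div_eq_one_iff_eq hρI₀]
    intro h
    exact hI₀ (by linarith)
  refine ⟨hχ, ?_⟩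
  convert tendsto_const_nhds.sub (tendsto_sum_sq_div_sub_pow_sq I hq hχ hχ₀) using 2
  rw [one_sub_div hρI₀, ← div_pow, div_div_div_cancel_right₀ hρI₀, sub_sub_cancel_left]
  field_simp

/-- **Limiting variance under weakly asymmetric scaling.** Let `I ≥ 1`, `ρ ∈ (0, I)`.
For `ε > 0` set `q_ε = e^{√ε}` and let `χ_ε` be the (unique) negative real solution of
`∑_{i=1}^{I} χ/(χ - q_εⁱ) = ρ`. Then `χ_ε → ρ/(ρ - I)` as `ε ↓ 0`, and consequently
`ρ - ∑_{i=1}^{I} χ_ε²/(q_εⁱ - χ_ε)² → ρ(I - ρ)/I`. -/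
theorem limit_chi_and_variance (I : ℕ) (hI : 1 ≤ I) (ρ : ℝ) (hρ0 : 0 < ρ) (hρI : ρ < I)
    (χ : ℝ → ℝ) (hχneg : ∀ ε : ℝ, 0 < ε → χ ε < 0)
    (hχeq : ∀ ε : ℝ, 0 < ε →
      ∑ i ∈ Finset.Icc 1 I, χ ε / (χ ε - Real.exp (Real.sqrt ε) ^ i) = ρ) :
    Tendsto χ (nhdsWithin 0 (Set.Ioi 0)) (nhds (ρ / (ρ - I))) ∧
      Tendsto (fun ε : ℝ =>
          ρ - ∑ i ∈ Finset.Icc 1 I, (χ ε) ^ 2 / (Real.exp (Real.sqrt ε) ^ i - χ ε) ^ 2)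
        (nhdsWithin 0 (Set.Ioi 0)) (nhds (ρ * ((I : ℝ) - ρ) / I)) :=
  limit_chi_and_variance_general I hI ρ hρI χ hχneg hχeq
end

section
/- Let I ∈ ℤ_{≥1}, J ∈ ℤ_{≥1}, and b ∈ ((I+J-2)/(I+J-1), 1). Define 𝔇_*(z) = z^{J/I} · ((bJ - (J-1))z - ((I+J)b - (I+J-1))) / (z - (Ib - (I-1))). Then for every z on the unit circle with z ≠ 1, one has |𝔇_*(z)| < 1. Precisely, for z = e^{iθ} with θ ∈ (-π, π] \ {0}, |𝔇_*(e^{iθ})|² = 1 - 2J(1-b)(1-cos θ)((I+J)b - (I+J-2)) / (1 + (Ib - (I-1))² - 2(Ib - (I-1))cos θ) < 1. -/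
/-!
On the unit circle `|p z - q|² = p² + q² - 2pq cos θ` for real `p, q`. The Möbius factor
`(p z - q)/(z - d)` of `𝔇_*` has `p - q = 1 - d`, so numerator minus denominator vanishes at
`cos θ = 1` and equals `-2 (d - pq)(1 - cos θ)`, where `d - pq = J(1-b)((I+J)b - (I+J-2))`.
The constraint on `b` makes this positive and puts the pole `d = Ib - (I-1)` in `[0, 1)`,
off the unit circle.
-/

open Real Complex

namespace Complex

lemma normSq_ofReal_mul_sub_ofReal {z : ℂ} (hz : ‖z‖ = 1) (p q : ℝ) :
    normSq (p * z - q) = p ^ 2 + q ^ 2 - 2 * p * q * z.re := by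
  have hz2 : z.re ^ 2 + z.im ^ 2 = 1 := by
    have h := normSq_eq_norm_sq z
    rwa [hz, one_pow, normSq_apply, ← sq, ← sq] at h
  simp only [normSq_apply, sub_re, sub_im, mul_re, mul_im, ofReal_re, ofReal_im]
  linear_combination p ^ 2 * hz2

lemma ne_ofReal_of_norm_eq_one {z : ℂ} (hz : ‖z‖ = 1) (hre : z.re < 1) {d : ℝ} (hd : 0 ≤ d) :
    z ≠ d := by
  rintro rfl
  rw [norm_real, Real.norm_of_nonneg hd] at hz
  simp [hz] at hre

lemma normSq_sub_ofReal {z : ℂ} (hz : ‖z‖ = 1) (d : ℝ) :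
    normSq (z - d) = 1 + d ^ 2 - 2 * d * z.re := by
  simpa using normSq_ofReal_mul_sub_ofReal hz 1 d

lemma normSq_mobius_eq {z : ℂ} (hz : ‖z‖ = 1) {p q d : ℝ} (hpqd : p - q = 1 - d) (hzd : z ≠ d) :
    normSq ((p * z - q) / (z - d)) =
      1 - 2 * (d - p * q) * (1 - z.re) / (1 + d ^ 2 - 2 * d * z.re) := by
  have hden_pos : 0 < normSq (z - d) := normSq_pos.mpr (sub_ne_zero.mpr hzd)
  rw [normSq_div, normSq_ofReal_mul_sub_ofReal hz, ← normSq_sub_ofReal hz]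
  field_simp
  rw [normSq_sub_ofReal hz]
  linear_combination (p - q + 1 - d) * hpqd

lemma normSq_mobius_lt_one {z : ℂ} (hz : ‖z‖ = 1) (hre : z.re < 1) {p q d : ℝ}
    (hpqd : p - q = 1 - d) (hd : 0 ≤ d) (hpq : p * q < d) :
    normSq ((p * z - q) / (z - d)) < 1 := by
  have hzd := ne_ofReal_of_norm_eq_one hz hre hd
  rw [normSq_mobius_eq hz hpqd hzd]
  have hden : 0 < 1 + d ^ 2 - 2 * d * z.re := by
    rw [← normSq_sub_ofReal hz]
    exact normSq_pos.mpr (sub_ne_zero.mpr hzd)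
  have := sub_pos.mpr hpq
  have := sub_pos.mpr hre
  exact sub_lt_self _ (by positivity)

end Complex

lemma Real.cos_lt_one_of_mem_Ioc {θ : ℝ} (hθ : θ ∈ Set.Ioc (-π) π) (hθ0 : θ ≠ 0) : cos θ < 1 :=
  (cos_le_one θ).lt_of_ne fun h => hθ0 <|
    (cos_eq_one_iff_of_lt_of_lt (by linarith [pi_pos, hθ.1]) (by linarith [pi_pos, hθ.2])).mp h

lemma Dstar_pole_nonneg {I J : ℕ} (hJ : 1 ≤ J) {b : ℝ} (hb : b < 1)
    (h : (I : ℝ) + J - 2 < b * (I + J - 1)) : 0 ≤ I * b - ((I : ℝ) - 1) := by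
  have hJ' : (1 : ℝ) ≤ J := by exact_mod_cast hJ
  nlinarith

lemma Dstar_coeff_mul_lt_pole {I J : ℕ} (hI : 1 ≤ I) (hJ : 1 ≤ J) {b : ℝ} (hb : b < 1)
    (h : (I : ℝ) + J - 2 < b * (I + J - 1)) :
    (b * J - ((J : ℝ) - 1)) * (((I : ℝ) + J) * b - ((I : ℝ) + J - 1)) < I * b - ((I : ℝ) - 1) := by
  have hI' : (1 : ℝ) ≤ I := by exact_mod_cast hI
  have hJ' : (1 : ℝ) ≤ J := by exact_mod_cast hJ
  have hb0 : 0 < b := by nlinarith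
  have hfactor : 0 < ((I : ℝ) + J) * b - ((I : ℝ) + J - 2) := by linarith
  have hJb : 0 < (J : ℝ) * (1 - b) := by nlinarith
  linear_combination mul_pos hJb hfactor

/-- **Steepest descent bound for `𝔇_*` on the unit circle** (condition (SD.𝒞₁) of the paper).
Let `I, J ≥ 1` and `b ∈ ((I+J-2)/(I+J-1), 1)`, and let
`𝔇_*(z) = z^{J/I} ((bJ-(J-1))z - ((I+J)b-(I+J-1)))/(z - (Ib-(I-1)))`
(the fractional power taken with `|z^{J/I}| = |z|^{J/I}`).  Then for `z = e^{iθ}`,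
`θ ∈ (-π, π] \ {0}`,
`|𝔇_*(e^{iθ})|² = 1 - 2J(1-b)(1-cos θ)((I+J)b-(I+J-2)) / (1 + (Ib-(I-1))² - 2(Ib-(I-1))cos θ)`
and this quantity is `< 1`. -/
theorem Dstar_unitCircle_bound (I J : ℕ) (hI : 1 ≤ I) (hJ : 1 ≤ J) (b : ℝ)
    (hb : b ∈ Set.Ioo (((I : ℝ) + J - 2) / ((I : ℝ) + J - 1)) 1)
    (θ : ℝ) (hθ : θ ∈ Set.Ioc (-π) π) (hθ0 : θ ≠ 0) :
    (‖Complex.exp (θ * Complex.I)‖ ^ ((J : ℝ) / I) *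
        ‖((((b * J - ((J : ℝ) - 1) : ℝ) : ℂ) * Complex.exp (θ * Complex.I)
              - ((((I : ℝ) + J) * b - ((I : ℝ) + J - 1) : ℝ) : ℂ)) /
            (Complex.exp (θ * Complex.I) - (((I : ℝ) * b - ((I : ℝ) - 1) : ℝ) : ℂ)))‖) ^ 2
      = 1 - 2 * J * (1 - b) * (1 - Real.cos θ) * (((I : ℝ) + J) * b - ((I : ℝ) + J - 2)) /
          (1 + ((I : ℝ) * b - ((I : ℝ) - 1)) ^ 2
            - 2 * ((I : ℝ) * b - ((I : ℝ) - 1)) * Real.cos θ) ∧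
    (‖Complex.exp (θ * Complex.I)‖ ^ ((J : ℝ) / I) *
        ‖((((b * J - ((J : ℝ) - 1) : ℝ) : ℂ) * Complex.exp (θ * Complex.I)
              - ((((I : ℝ) + J) * b - ((I : ℝ) + J - 1) : ℝ) : ℂ)) /
            (Complex.exp (θ * Complex.I) - (((I : ℝ) * b - ((I : ℝ) - 1) : ℝ) : ℂ)))‖) ^ 2
      < 1 := by
  have hn : (0 : ℝ) < I + J - 1 := by
    have : (1 : ℝ) ≤ I := by exact_mod_cast hI
    have : (1 : ℝ) ≤ J := by exact_mod_cast hJ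
    linarith
  have h : (I : ℝ) + J - 2 < b * (I + J - 1) := (div_lt_iff₀ hn).mp hb.1
  have hd := Dstar_pole_nonneg hJ hb.2 h
  have hpq := Dstar_coeff_mul_lt_pole hI hJ hb.2 h
  have hpqd : (b * J - ((J : ℝ) - 1)) - (((I : ℝ) + J) * b - ((I : ℝ) + J - 1))
      = 1 - ((I : ℝ) * b - ((I : ℝ) - 1)) := by ring
  have hz := norm_exp_ofReal_mul_I θ
  have hre : (Complex.exp (θ * Complex.I)).re < 1 := by
    rw [exp_ofReal_mul_I_re]
    exact cos_lt_one_of_mem_Ioc hθ hθ0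
  rw [hz, one_rpow, one_mul, Complex.sq_norm]
  refine ⟨?_, normSq_mobius_lt_one hz hre hpqd hd hpq⟩
  rw [normSq_mobius_eq hz hpqd (ne_ofReal_of_norm_eq_one hz hre hd), exp_ofReal_mul_I_re]
  ring
end

section
/- Fix real parameters and suppose 0 < δ < 1. For infinitely many independent {0,1}-valued random variables, consider the partial sums K_{x,y} = ∑_{y'=x}^{y} (∏_{z=y'+1}^{y} (B'_z - B_z)) B_{y'} where B_z, B'_z are independent Bernoulli random variables with |B'_z - B_z| ≤ 1 and E[|B'_z - B_z|^p] ≤ 1 - δ for all z and any fixed p ≥ 1. Then the L^p norm of the term indexed by y' is bounded by (1-δ)^{(y-y')/p}; consequently as x → -∞ the sum K_{x,y} converges in L^p, and since each K_{x,y} ∈ {0,1}, it also converges almost surely to a {0,1}-valued random variable. -/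
/-!
Write `T_{y'} = (∏_{z=y'+1}^{y} (B'_z - B_z)) B_{y'}` for the summands. Since `|T_{y'}|` is at
most the product of the independent factors `|B'_z - B_z|`, its `p`-th moment is at most
`(1-δ)^{y-y'}`. As `|T_{y'}| ∈ {0,1}`, this moment is also `P(T_{y'} ≠ 0)`, which is therefore
summable in `y'`; by Borel–Cantelli almost surely only finitely many summands are nonzero, so
`K_{x,y}` is eventually constant as `x → -∞`. Reading the sum from its right end,
`K_{x,y} = B_y + (B'_y - B_y) K_{x,y-1}` sends `0` to `B_y` and `1` to `B'_y`, so every `K_{x,y}`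
and hence the limit lies in `{0,1}`; dominated convergence upgrades the almost sure convergence
to convergence in `L^p`.
-/

open MeasureTheory ProbabilityTheory Filter Finset Topology
open scoped ENNReal

section Flux

variable {R : Type*} [CommRing R]

noncomputable def fluxTerm (c b : ℤ → R) (x y : ℤ) : R := (∏ z ∈ Icc (x + 1) y, c z) * b x

noncomputable def fluxSum (c b : ℤ → R) (x y : ℤ) : R := ∑ y' ∈ Icc x y, fluxTerm c b y' y

variable {c b : ℤ → R} {x y : ℤ}

lemma fluxSum_of_lt (h : y < x) : fluxSum c b x y = 0 := by
  simp [fluxSum, Icc_eq_empty_of_lt h]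

lemma fluxSum_add_one (h : x ≤ y + 1) :
    fluxSum c b x (y + 1) = c (y + 1) * fluxSum c b x y + b (y + 1) := by
  rw [fluxSum, ← insert_Icc_right_eq_Icc_add_one h, sum_insert (by simp), fluxSum, mul_sum,
    add_comm]
  congr 1
  · refine sum_congr rfl fun y' hy' => ?_
    rw [fluxTerm, fluxTerm, ← insert_Icc_right_eq_Icc_add_one (by simp at hy'; omega),
      prod_insert (by simp), mul_assoc]
  · simp [fluxTerm]

lemma fluxSum_eq_zero_or_eq_one {b b' : ℤ → R} (hb : ∀ z, b z = 0 ∨ b z = 1)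
    (hb' : ∀ z, b' z = 0 ∨ b' z = 1) (x y : ℤ) :
    fluxSum (fun z => b' z - b z) b x y = 0 ∨ fluxSum (fun z => b' z - b z) b x y = 1 := by
  rcases lt_or_ge y (x - 1) with hyx | hxy
  · exact .inl (fluxSum_of_lt (by omega))
  induction y, hxy using Int.leInduction with
  | base => exact .inl (fluxSum_of_lt (by omega))
  | succ y hy ih =>
    rw [fluxSum_add_one (by omega)]
    rcases ih with h | h <;> rw [h]
    · simpa using hb (y + 1)
    · simpa using hb' (y + 1)

end Flux

lemma abs_fluxTerm_eq_zero_or_eq_one {R : Type*} [CommRing R] [LinearOrder R]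
    [IsStrictOrderedRing R] {b b' : ℤ → R} (hb : ∀ z, b z = 0 ∨ b z = 1)
    (hb' : ∀ z, b' z = 0 ∨ b' z = 1) (x y : ℤ) :
    |fluxTerm (fun z => b' z - b z) b x y| = 0 ∨ |fluxTerm (fun z => b' z - b z) b x y| = 1 := by
  have hmul : ∀ r s : R, (r = 0 ∨ r = 1) → (s = 0 ∨ s = 1) → r * s = 0 ∨ r * s = 1 := by
    rintro r s (rfl | rfl) (rfl | rfl) <;> simp
  rw [fluxTerm, abs_mul, abs_prod]
  refine hmul _ _ (prod_induction _ _ hmul (.inr rfl) fun z _ => ?_) ?_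
  · rcases hb z with h | h <;> rcases hb' z with h' | h' <;> simp [h, h']
  · rcases hb x with h | h <;> simp [h]

lemma eventually_sum_Icc_eq_of_eventually_eq_zero {M : Type*} [AddCommMonoid M] {f : ℤ → M}
    (hf : ∀ᶠ x in atBot, f x = 0) (y : ℤ) : ∃ L, ∀ᶠ x in atBot, ∑ i ∈ Icc x y, f i = L := by
  obtain ⟨N, hN⟩ := eventually_atBot.1 hf
  refine ⟨∑ i ∈ Icc N y, f i, (eventually_le_atBot N).mono fun x hx => ?_⟩
  refine (sum_subset (Icc_subset_Icc_left hx) fun i hi hiN => hN i ?_).symm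
  simp only [mem_Icc, not_and_or, not_le] at hi hiN
  omega

section Probability

variable {Ω : Type*} [MeasurableSpace Ω] {μ : Measure Ω}

lemma ProbabilityTheory.iIndepFun.integral_finset_prod_eq_prod_integral {ι : Type*}
    {X : ι → Ω → ℝ} (hX : iIndepFun X μ) (mX : ∀ i, AEStronglyMeasurable (X i) μ)
    (s : Finset ι) : ∫ ω, ∏ i ∈ s, X i ω ∂μ = ∏ i ∈ s, ∫ ω, X i ω ∂μ := by
  have := (hX.precomp Subtype.val_injective).integral_fun_prod_eq_prod_integral
    (X := fun i : s => X i) fun i => mX i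
  convert this using 1
  · exact integral_congr_ae (.of_forall fun ω => (prod_coe_sort s fun i => X i ω).symm)
  · exact (prod_coe_sort s fun i => ∫ ω, X i ω ∂μ).symm

lemma ae_eventually_notMem_atBot_of_tsum_ne_top {s : ℤ → Set Ω} (y : ℤ)
    (hs : ∑' n : ℕ, μ (s (y - n)) ≠ ∞) : ∀ᵐ ω ∂μ, ∀ᶠ x in atBot, ω ∉ s x := by
  have htoNat : Tendsto (fun x : ℤ => (y - x).toNat) atBot atTop :=
    tendsto_atTop.2 fun n => (eventually_le_atBot (y - n)).mono fun x hx => by omega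
  filter_upwards [ae_eventually_notMem hs] with ω hω
  filter_upwards [htoNat.eventually hω, eventually_le_atBot y] with x hx hxy
  rwa [show y - ((y - x).toNat : ℤ) = x by omega] at hx

lemma ae_eventually_atBot_eq_zero_of_measureReal_ne_zero_le [IsFiniteMeasure μ] {E : Type*}
    [Zero E] {T : ℤ → Ω → E} {u : ℕ → ℝ} (hu : Summable u) (y : ℤ)
    (hT : ∀ n : ℕ, μ.real {ω | T (y - n) ω ≠ 0} ≤ u n) :
    ∀ᵐ ω ∂μ, ∀ᶠ x in atBot, T x ω = 0 := by
  have hu0 : ∀ n, 0 ≤ u n := fun n => measureReal_nonneg.trans (hT n)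
  have hsum : ∑' n : ℕ, μ {ω | T (y - n) ω ≠ 0} ≠ ∞ := by
    refine ne_top_of_le_ne_top (ENNReal.ofReal_ne_top (r := ∑' n, u n)) ?_
    rw [ENNReal.ofReal_tsum_of_nonneg hu0 hu]
    exact ENNReal.tsum_le_tsum fun n =>
      (ofReal_measureReal).symm.trans_le (ENNReal.ofReal_le_ofReal (hT n))
  simpa using ae_eventually_notMem_atBot_of_tsum_ne_top (s := fun x => {ω | T x ω ≠ 0}) y hsum

lemma measureReal_ne_zero_eq_integral_abs_rpow {X : Ω → ℝ} (hX : Measurable X)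
    (hX01 : ∀ ω, |X ω| = 0 ∨ |X ω| = 1) {p : ℝ} (hp : p ≠ 0) :
    μ.real {ω | X ω ≠ 0} = ∫ ω, |X ω| ^ p ∂μ := by
  have hs : MeasurableSet {ω | X ω ≠ 0} := (measurableSet_eq_fun hX measurable_const).compl
  rw [← integral_indicator_one hs]
  refine integral_congr_ae (.of_forall fun ω => ?_)
  rcases hX01 ω with h | h
  · simp [abs_eq_zero.1 h, Real.zero_rpow hp]
  · have : X ω ≠ 0 := by rintro h0; simp [h0] at h
    simp [this, h]

lemma tendsto_integral_abs_sub_rpow_of_ae_tendsto [IsFiniteMeasure μ] {ι : Type*}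
    {l : Filter ι} [l.IsCountablyGenerated] {F : ι → Ω → ℝ} {f : Ω → ℝ} {C p : ℝ} (hp : 0 < p)
    (hFm : ∀ i, AEStronglyMeasurable (F i) μ) (hfm : AEStronglyMeasurable f μ)
    (hFC : ∀ i, ∀ᵐ ω ∂μ, |F i ω| ≤ C) (hfC : ∀ᵐ ω ∂μ, |f ω| ≤ C)
    (hlim : ∀ᵐ ω ∂μ, Tendsto (F · ω) l (𝓝 (f ω))) :
    Tendsto (fun i => ∫ ω, |F i ω - f ω| ^ p ∂μ) l (𝓝 0) := by
  have hbound : ∀ i, ∀ᵐ ω ∂μ, ‖|F i ω - f ω| ^ p‖ ≤ (C + C) ^ p := fun i => by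
    filter_upwards [hFC i, hfC] with ω hF hf
    rw [Real.norm_of_nonneg (by positivity)]
    exact Real.rpow_le_rpow (abs_nonneg _) ((abs_sub _ _).trans (add_le_add hF hf)) hp.le
  have hmeas : ∀ i, AEStronglyMeasurable (fun ω => |F i ω - f ω| ^ p) μ := fun i =>
    (((hFm i).sub hfm).norm.aemeasurable.pow_const p).aestronglyMeasurable
  simpa using tendsto_integral_filter_of_dominated_convergence (f := fun _ => 0)
    (fun _ => (C + C) ^ p) (.of_forall hmeas) (.of_forall hbound) (integrable_const _)
    (hlim.mono fun ω h => by
      simpa [Real.zero_rpow hp.ne'] using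
        ((h.sub_const (f ω)).abs.rpow_const (.inr hp.le) : Tendsto _ l _))

lemma integral_abs_fluxTerm_rpow_le [IsProbabilityMeasure μ] {c b : ℤ → Ω → ℝ} {p q : ℝ}
    (hp : 0 ≤ p) (hc : iIndepFun c μ) (hcm : ∀ z, Measurable (c z))
    (hc1 : ∀ z ω, |c z ω| ≤ 1) (hb1 : ∀ z ω, |b z ω| ≤ 1)
    (hmom : ∀ z, ∫ ω, |c z ω| ^ p ∂μ ≤ q) (x y : ℤ) :
    ∫ ω, |fluxTerm (c · ω) (b · ω) x y| ^ p ∂μ ≤ q ^ (y - x).toNat := by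
  have hle : ∀ ω, |fluxTerm (c · ω) (b · ω) x y| ^ p ≤ ∏ z ∈ Icc (x + 1) y, |c z ω| ^ p := by
    intro ω
    rw [fluxTerm, abs_mul, Real.mul_rpow (abs_nonneg _) (abs_nonneg _), abs_prod,
      ← Real.finsetProd_rpow _ _ fun _ _ => abs_nonneg _]
    exact mul_le_of_le_one_right (prod_nonneg fun _ _ => by positivity)
      (Real.rpow_le_one (abs_nonneg _) (hb1 x ω) hp)
  have hpow : iIndepFun (fun z ω => |c z ω| ^ p) μ :=
    hc.comp (fun _ t => |t| ^ p) fun _ => by fun_prop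
  have hpowm : ∀ z, Measurable fun ω => |c z ω| ^ p := fun z => by fun_prop
  have hint : Integrable (fun ω => ∏ z ∈ Icc (x + 1) y, |c z ω| ^ p) μ :=
    .of_bound (by fun_prop) 1 (.of_forall fun ω => by
      rw [Real.norm_of_nonneg (prod_nonneg fun _ _ => by positivity)]
      exact prod_le_one (fun _ _ => by positivity)
        fun z _ => Real.rpow_le_one (abs_nonneg _) (hc1 z ω) hp)
  calc ∫ ω, |fluxTerm (c · ω) (b · ω) x y| ^ p ∂μ
      ≤ ∫ ω, ∏ z ∈ Icc (x + 1) y, |c z ω| ^ p ∂μ :=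
        integral_mono_of_nonneg (.of_forall fun _ => by positivity) hint (.of_forall hle)
    _ = ∏ z ∈ Icc (x + 1) y, ∫ ω, |c z ω| ^ p ∂μ :=
        hpow.integral_finset_prod_eq_prod_integral (fun z => (hpowm z).aestronglyMeasurable) _
    _ ≤ ∏ _z ∈ Icc (x + 1) y, q :=
        prod_le_prod (fun _ _ => integral_nonneg fun _ => by positivity) fun z _ => hmom z
    _ = q ^ (y - x).toNat := by rw [prod_const, Int.card_Icc, add_sub_add_right_eq_sub]

end Probability

lemma rpow_one_div_le_rpow_div_of_le_pow_toNat {a q p : ℝ} {n : ℤ} (ha : 0 ≤ a) (hq : 0 ≤ q)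
    (hp : 0 ≤ p) (hn : 0 ≤ n) (h : a ≤ q ^ n.toNat) : a ^ (1 / p) ≤ q ^ ((n : ℝ) / p) := by
  have hcast : ((n.toNat : ℕ) : ℝ) = n := by exact_mod_cast Int.toNat_of_nonneg hn
  calc a ^ (1 / p) ≤ (q ^ n.toNat) ^ (1 / p) := Real.rpow_le_rpow ha h (by positivity)
    _ = q ^ ((n : ℝ) / p) := by rw [← Real.rpow_natCast, ← Real.rpow_mul hq, hcast, mul_one_div]

/-- **Convergence of the flux series defining the bi-infinite SHS6V model**
(Lemma 2.5 of the paper).  Let `(B_z, B'_z)_{z ∈ ℤ}` be an independent family of pairs of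
`{0,1}`-valued random variables with `E[|B'_z - B_z|^p] ≤ 1 - δ` for all `z`, where
`p ≥ 1` and `0 < δ < 1`.  For `y ∈ ℤ` and `x ≤ y` set
`K_{x,y} = ∑_{y'=x}^{y} (∏_{z=y'+1}^{y} (B'_z - B_z)) B_{y'}`.  Then the `L^p` norm of the
term indexed by `y' = x` is at most `(1-δ)^{(y-x)/p}`; each `K_{x,y}` takes values in
`{0,1}`; and as `x → -∞` the sums `K_{x,y}` converge in `L^p` and almost surely to a
`{0,1}`-valued random variable. -/
theorem flux_series_converges {Ω : Type*} [MeasureSpace Ω]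
    [IsProbabilityMeasure (ℙ : Measure Ω)]
    (p δ : ℝ) (hp : 1 ≤ p) (hδ0 : 0 < δ) (hδ1 : δ < 1)
    (B B' : ℤ → Ω → ℝ)
    (hBmeas : ∀ z, Measurable (B z)) (hB'meas : ∀ z, Measurable (B' z))
    (hindep : iIndepFun (m := fun _ : ℤ => (inferInstance : MeasurableSpace (ℝ × ℝ)))
      (fun z ω => (B z ω, B' z ω)) ℙ)
    (hB01 : ∀ z ω, B z ω = 0 ∨ B z ω = 1)
    (hB'01 : ∀ z ω, B' z ω = 0 ∨ B' z ω = 1)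
    (hmoment : ∀ z, ∫ ω, |B' z ω - B z ω| ^ p ∂ℙ ≤ 1 - δ)
    (y : ℤ) :
    (∀ x : ℤ, x ≤ y →
        (∫ ω, |(∏ z ∈ Finset.Icc (x + 1) y, (B' z ω - B z ω)) * B x ω| ^ p ∂ℙ) ^ (1 / p)
          ≤ (1 - δ) ^ (((y - x : ℤ) : ℝ) / p)) ∧
      (∀ x : ℤ, x ≤ y → ∀ ω,
        (∑ y' ∈ Finset.Icc x y, (∏ z ∈ Finset.Icc (y' + 1) y, (B' z ω - B z ω)) * B y' ω) = 0 ∨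
        (∑ y' ∈ Finset.Icc x y, (∏ z ∈ Finset.Icc (y' + 1) y, (B' z ω - B z ω)) * B y' ω) = 1) ∧
      ∃ K : Ω → ℝ, (∀ᵐ ω ∂ℙ, K ω = 0 ∨ K ω = 1) ∧
        Tendsto (fun x : ℤ => ∫ ω,
            |(∑ y' ∈ Finset.Icc x y, (∏ z ∈ Finset.Icc (y' + 1) y, (B' z ω - B z ω)) * B y' ω)
              - K ω| ^ p ∂ℙ)
          atBot (nhds 0) ∧
        ∀ᵐ ω ∂ℙ, Tendsto (fun x : ℤ =>
            ∑ y' ∈ Finset.Icc x y, (∏ z ∈ Finset.Icc (y' + 1) y, (B' z ω - B z ω)) * B y' ω)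
          atBot (nhds (K ω)) := by
  have hp0 : 0 < p := by linarith
  have habs_le_one : ∀ {r : ℝ}, r = 0 ∨ r = 1 → |r| ≤ 1 := by rintro _ (rfl | rfl) <;> simp
  have hdiff (z : ℤ) (ω : Ω) : |B' z ω - B z ω| ≤ 1 := by
    rcases hB01 z ω with h | h <;> rcases hB'01 z ω with h' | h' <;> simp [h, h']
  let S (x : ℤ) (ω : Ω) : ℝ := fluxSum (fun z => B' z ω - B z ω) (B · ω) x y
  have hS01 (x : ℤ) (ω : Ω) : S x ω = 0 ∨ S x ω = 1 :=
    fluxSum_eq_zero_or_eq_one (hB01 · ω) (hB'01 · ω) x y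
  have hmom (x : ℤ) : ∫ ω, |fluxTerm (fun z => B' z ω - B z ω) (B · ω) x y| ^ p ∂ℙ
      ≤ (1 - δ) ^ (y - x).toNat :=
    integral_abs_fluxTerm_rpow_le hp0.le (hindep.comp (fun _ q => q.2 - q.1) fun _ => by fun_prop)
      (fun z => (hB'meas z).sub (hBmeas z)) hdiff (fun z ω => habs_le_one (hB01 z ω)) hmoment x y
  have hterm : ∀ᵐ ω ∂ℙ, ∀ᶠ x in atBot, fluxTerm (fun z => B' z ω - B z ω) (B · ω) x y = 0 :=
    ae_eventually_atBot_eq_zero_of_measureReal_ne_zero_le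
      (summable_geometric_of_lt_one (r := 1 - δ) (by linarith) (by linarith)) y fun n => by
        rw [measureReal_ne_zero_eq_integral_abs_rpow (by simp only [fluxTerm]; fun_prop)
          (fun ω => abs_fluxTerm_eq_zero_or_eq_one (hB01 · ω) (hB'01 · ω) _ y) hp0.ne']
        simpa using hmom (y - n)
  have hconv : ∀ᵐ ω ∂ℙ, Tendsto (S · ω) atBot (𝓝 (limUnder atBot (S · ω))) := by
    filter_upwards [hterm] with ω hω
    obtain ⟨L, hL⟩ := eventually_sum_Icc_eq_of_eventually_eq_zero hω y
    exact tendsto_nhds_limUnder ⟨L, tendsto_const_nhds.congr' (hL.mono fun _ h => h.symm)⟩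
  have hK01 : ∀ᵐ ω ∂ℙ, limUnder atBot (S · ω) = 0 ∨ limUnder atBot (S · ω) = 1 :=
    hconv.mono fun ω h => (Set.toFinite {0, 1}).isClosed.mem_of_tendsto h (.of_forall (hS01 · ω))
  refine ⟨fun x hxy => ?_, fun x _ ω => hS01 x ω, _, hK01, ?_, hconv⟩
  · exact rpow_one_div_le_rpow_div_of_le_pow_toNat (integral_nonneg fun _ => by positivity)
      (by linarith) hp0.le (sub_nonneg.2 hxy) (hmom x)
  · have hSm (x : ℤ) : Measurable (S x) := by
      simp only [S, fluxSum, fluxTerm]; fun_prop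
    have hKm := aemeasurable_of_tendsto_metrizable_ae _ (fun x => (hSm x).aemeasurable) hconv
    exact tendsto_integral_abs_sub_rpow_of_ae_tendsto hp0 (fun x => (hSm x).aestronglyMeasurable)
      hKm.aestronglyMeasurable (fun x => .of_forall fun ω => habs_le_one (hS01 x ω))
      (hK01.mono fun _ => habs_le_one) hconv
end

section
/- Let 0 < θ < 1 and C > 0. Suppose nonnegative numbers P(x⃗, y⃗) indexed by pairs of k-tuples of integers satisfy the one-step bound P₁(y⃗, x⃗) ≤ C ∏_{i=1}^k θ^{|y_i - x_i|} and the (t-s)-step quantity P_{t,s}(y⃗, x⃗) is bounded by the sum over all nonincreasing coordinate trajectories of products of one-step bounds, where each coordinate can only decrease at each step. Then P_{t,s}(y⃗, x⃗) ≤ C' ∏_{i=1}^k binom(|x_i - y_i| + t - s, t - s) θ^{|y_i - x_i|}, where binom is the binomial coefficient counting the number of monotone lattice paths from y_i to x_i in t-s steps. -/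
/-!
Writing `d = |xᵢ - yᵢ|`, the number of ways to split a leftward displacement `d` into `n + 1`
nonnegative steps is `(d + n).choose n`. Along any such path the one-step factors `θ^{|Δ|}`
multiply to `θ^d`, so composing one more step only sums `(d' + n).choose n` over the
intermediate position, which is `(d + n + 1).choose (n + 1)` by the hockey-stick identity.
Induction gives `P (n + 1) y x ≤ C^(n+1) ∏ᵢ (dᵢ + n).choose n θ^{dᵢ}`, and
`(d + n).choose n ≤ (d + n + 1).choose (n + 1)`.
-/

open Finset

theorem Int.sum_Icc_choose_natAbs_sub_add (n : ℕ) {a b : ℤ} (hab : a ≤ b) :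
    ∑ c ∈ Icc a b, ((c - a).natAbs + n).choose n = ((b - a).natAbs + n + 1).choose (n + 1) := by
  rw [Int.Icc_eq_finset_map, sum_map, show (b + 1 - a).toNat = (b - a).natAbs + 1 by omega,
    ← Nat.sum_range_add_choose]
  exact sum_congr rfl fun d _ => by simp

/-- The factor for one coordinate moving from `b` down to `a`. -/
noncomputable def pathWeight (θ : ℝ) (n : ℕ) (b a : ℤ) : ℝ :=
  ((a - b).natAbs + n).choose n * θ ^ (b - a).natAbs

theorem pathWeight_zero (θ : ℝ) (b a : ℤ) : pathWeight θ 0 b a = θ ^ (b - a).natAbs := by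
  simp [pathWeight]

theorem pathWeight_nonneg {θ : ℝ} (hθ : 0 ≤ θ) (n : ℕ) (b a : ℤ) : 0 ≤ pathWeight θ n b a := by
  unfold pathWeight; positivity

theorem pathWeight_le_succ {θ : ℝ} (hθ : 0 ≤ θ) (n : ℕ) (b a : ℤ) :
    pathWeight θ n b a ≤ pathWeight θ (n + 1) b a := by
  unfold pathWeight
  gcongr
  rw [← add_assoc, Nat.choose_succ_succ']
  exact Nat.le_add_right _ _

theorem sum_Icc_pathWeight_zero_mul_le {θ : ℝ} (hθ : 0 ≤ θ) (n : ℕ) (a b : ℤ) :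
    ∑ c ∈ Icc a b, pathWeight θ 0 b c * pathWeight θ n c a ≤ pathWeight θ (n + 1) b a := by
  rcases lt_or_ge b a with hba | hab
  · simpa [Icc_eq_empty_of_lt hba] using pathWeight_nonneg hθ (n + 1) b a
  -- along a monotone path the exponents of `θ` add up to `|b - a|`
  have hsplit : ∀ c ∈ Icc a b, pathWeight θ 0 b c * pathWeight θ n c a
      = ((c - a).natAbs + n).choose n * θ ^ (b - a).natAbs := by
    intro c hc
    obtain ⟨hac, hcb⟩ := mem_Icc.mp hc
    rw [pathWeight_zero, pathWeight, mul_left_comm, ← pow_add,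
      show (b - c).natAbs + (c - a).natAbs = (b - a).natAbs by omega,
      show (a - c).natAbs = (c - a).natAbs by omega]
  rw [sum_congr rfl hsplit, ← sum_mul, ← Nat.cast_sum, Int.sum_Icc_choose_natAbs_sub_add n hab,
    pathWeight, show (a - b).natAbs = (b - a).natAbs by omega, ← add_assoc]

theorem Finset.sum_Icc_prod_eq_prod_sum_Icc {ι α β : Type*} [Fintype ι] [DecidableEq ι]
    [DecidableEq α] [PartialOrder α] [LocallyFiniteOrder α] [CommSemiring β]
    (x y : ι → α) (f : ι → α → β) :
    ∑ w ∈ Icc x y, ∏ i, f i (w i) = ∏ i, ∑ c ∈ Icc (x i) (y i), f i c := by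
  rw [Pi.Icc_eq, prod_univ_sum]

theorem sum_Icc_prod_pathWeight_le {ι : Type*} [Fintype ι] [DecidableEq ι] {θ : ℝ} (hθ : 0 ≤ θ)
    (n : ℕ) (x y : ι → ℤ) :
    ∑ w ∈ Icc x y, (∏ i, pathWeight θ 0 (y i) (w i)) * ∏ i, pathWeight θ n (w i) (x i)
      ≤ ∏ i, pathWeight θ (n + 1) (y i) (x i) := by
  simp_rw [← prod_mul_distrib]
  rw [sum_Icc_prod_eq_prod_sum_Icc x y fun i c => pathWeight θ 0 (y i) c * pathWeight θ n c (x i)]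
  exact prod_le_prod (fun i _ => sum_nonneg fun c _ => mul_nonneg
    (pathWeight_nonneg hθ 0 _ _) (pathWeight_nonneg hθ n _ _))
    fun i _ => sum_Icc_pathWeight_zero_mul_le hθ n (x i) (y i)

theorem transition_le_pow_mul_prod_pathWeight {ι : Type*} [Fintype ι] [DecidableEq ι]
    {θ C : ℝ} (hθ : 0 ≤ θ) (hC : 0 ≤ C) {P : ℕ → (ι → ℤ) → (ι → ℤ) → ℝ}
    (hnonneg : ∀ y x, 0 ≤ P 1 y x)
    (hone : ∀ y x, P 1 y x ≤ C * ∏ i, pathWeight θ 0 (y i) (x i))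
    (hrec : ∀ n y x, P (n + 1) y x = ∑ w ∈ Icc x y, P 1 y w * P n w x) (n : ℕ) (y x : ι → ℤ) :
    P (n + 1) y x ≤ C ^ (n + 1) * ∏ i, pathWeight θ n (y i) (x i) := by
  induction n generalizing y x with
  | zero => simpa using hone y x
  | succ n ih =>
    calc P (n + 1 + 1) y x = ∑ w ∈ Icc x y, P 1 y w * P (n + 1) w x := hrec _ y x
      _ ≤ ∑ w ∈ Icc x y, (C * ∏ i, pathWeight θ 0 (y i) (w i))
            * (C ^ (n + 1) * ∏ i, pathWeight θ n (w i) (x i)) :=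
          sum_le_sum fun w _ => mul_le_mul_of_nonneg (hone y w) (ih w x) (hnonneg y w)
            (mul_nonneg (pow_nonneg hC _) (prod_nonneg fun i _ => pathWeight_nonneg hθ n _ _))
      _ = C ^ (n + 1 + 1) * ∑ w ∈ Icc x y,
            (∏ i, pathWeight θ 0 (y i) (w i)) * ∏ i, pathWeight θ n (w i) (x i) := by
          rw [mul_sum]
          exact sum_congr rfl fun w _ => by ring
      _ ≤ C ^ (n + 1 + 1) * ∏ i, pathWeight θ (n + 1) (y i) (x i) :=
          mul_le_mul_of_nonneg_left (sum_Icc_prod_pathWeight_le hθ n x y) (by positivity)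

theorem multiStep_transition_bound_general (k : ℕ) (θ C : ℝ)
    (hθ0 : 0 < θ) (hC : 0 < C)
    (P : ℕ → (Fin k → ℤ) → (Fin k → ℤ) → ℝ)
    (hnonneg : ∀ y x, 0 ≤ P 1 y x)
    (hone : ∀ y x, P 1 y x ≤ C * ∏ i, θ ^ (y i - x i).natAbs)
    (hrec : ∀ n : ℕ, ∀ y x : Fin k → ℤ,
      P (n + 1) y x = ∑ w ∈ Finset.Icc x y, P 1 y w * P n w x) :
    ∀ n : ℕ, 1 ≤ n → ∃ C' > (0 : ℝ), ∀ y x : Fin k → ℤ,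
      P n y x ≤ C' * ∏ i, ((Nat.choose ((x i - y i).natAbs + n) n : ℝ)
        * θ ^ (y i - x i).natAbs) := by
  intro n hn
  obtain ⟨m, rfl⟩ := Nat.exists_eq_add_of_le' hn
  refine ⟨C ^ (m + 1), by positivity, fun y x => ?_⟩
  calc P (m + 1) y x ≤ C ^ (m + 1) * ∏ i, pathWeight θ m (y i) (x i) :=
        transition_le_pow_mul_prod_pathWeight hθ0.le hC.le hnonneg
          (fun y x => by simpa only [pathWeight_zero] using hone y x) hrec m y x
    _ ≤ C ^ (m + 1) * ∏ i, pathWeight θ (m + 1) (y i) (x i) :=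
        mul_le_mul_of_nonneg_left (prod_le_prod (fun i _ => pathWeight_nonneg hθ0.le m _ _)
          fun i _ => pathWeight_le_succ hθ0.le m _ _) (by positivity)

/-- **Multi-step transition probability bound for leftward-moving particles**
(used in Corollary 3.8 of the paper).  Let `0 < θ < 1`, `C > 0`, and let
`P n y x ≥ 0` be kernels on `k`-tuples of integers such that the one-step kernel satisfies
`P 1 y x ≤ C ∏ᵢ θ^{|yᵢ-xᵢ|}`, is supported on coordinatewise-nonincreasing moves
(`P 1 y x = 0` unless `xᵢ ≤ yᵢ` for all `i`), `P 0` is the identity kernel, and the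
`(n+1)`-step kernel is the composition of the one-step kernel with the `n`-step kernel
(the sum over intermediate states being the finite sum over the box `[x, y]`).  Then for
each number of steps `n ≥ 1` there is a constant `C' > 0` with
`P n y x ≤ C' ∏ᵢ binom(|xᵢ-yᵢ|+n, n) θ^{|yᵢ-xᵢ|}`. -/
theorem multiStep_transition_bound (k : ℕ) (hk : 1 ≤ k) (θ C : ℝ)
    (hθ0 : 0 < θ) (hθ1 : θ < 1) (hC : 0 < C)
    (P : ℕ → (Fin k → ℤ) → (Fin k → ℤ) → ℝ)
    (hnonneg : ∀ y x, 0 ≤ P 1 y x)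
    (hone : ∀ y x, P 1 y x ≤ C * ∏ i, θ ^ (y i - x i).natAbs)
    (hsupp : ∀ y x : Fin k → ℤ, ¬(∀ i, x i ≤ y i) → P 1 y x = 0)
    (hbase : ∀ y x : Fin k → ℤ, P 0 y x = if x = y then 1 else 0)
    (hrec : ∀ n : ℕ, ∀ y x : Fin k → ℤ,
      P (n + 1) y x = ∑ w ∈ Finset.Icc x y, P 1 y w * P n w x) :
    ∀ n : ℕ, 1 ≤ n → ∃ C' > (0 : ℝ), ∀ y x : Fin k → ℤ,
      P n y x ≤ C' * ∏ i, ((Nat.choose ((x i - y i).natAbs + n) n : ℝ)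
        * θ ^ (y i - x i).natAbs) :=
  multiStep_transition_bound_general k θ C hθ0 hC P hnonneg hone hrec
end

section
/- Let q > 1, I ∈ ℤ_{≥1}, ν = q^{-I}, ρ ∈ (0,I), and let χ < 0 solve ∑_{i=1}^I χ/(χ - q^i) = ρ. Let π_ρ be the stationary single-site measure and suppose the occupation variables η_z are i.i.d. π_ρ. Suppose K(y-1) ∈ {0,1} is independent of η_y with P(K(y-1)=1) = αχ/(1+αχ) for a parameter α with 1 + αχ > 0 and probabilities in (0,1). Define the updated variable η' = η_y - B with B ∼ Ber(α(1-q^{η_y})/(1+α)) if K(y-1)=0, and η' = η_y + 1 - B' with B' ∼ Ber((α+νq^{η_y})/(1+α)) if K(y-1)=1 (B, B' conditionally independent given η_y). Then η' ∼ π_ρ; that is, for each i ∈ {0,…,I}: (1/(1+αχ))[π_ρ(i)(1+αq^i)/(1+α) + π_ρ(i+1)α(1-q^{i+1})/(1+α)] + (αχ/(1+αχ))[π_ρ(i)(α+νq^i)/(1+α) + π_ρ(i-1)(1-νq^{i-1})/(1+α)] = π_ρ(i). -/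
/-!
The weights satisfy the detailed-balance recurrence `π(i+1)(1 - q^{i+1}) = χ π(i)(1 - ν qⁱ)`,
read off from one more factor of each `q`-Pochhammer symbol. Using it to express the
contribution from `i + 1` and (after multiplying by `χ`) the one from `i - 1` through `π(i)`
(at `i = 0` the absent term matches `1 - q⁰ = 0`), the left-hand side becomes `π(i)` times
`(1 + α qⁱ + αχ(1 - ν qⁱ) + αχ(α + ν qⁱ) + α(1 - qⁱ)) / ((1 + α)(1 + αχ)) = 1`.
-/

lemma statPi_succ (q χ : ℝ) (I i : ℕ) :
    statPi q χ I (i + 1)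
      = statPi q χ I i * ((1 - q ^ (-(I : ℤ)) * q ^ i) / (1 - q ^ (i + 1))) * χ := by
  simp only [statPi, Finset.prod_range_succ, mul_div_mul_comm, pow_succ' q i, pow_succ χ]
  ring

lemma statPi_succ_mul_one_sub_pow (q χ : ℝ) (I i : ℕ) (hq : q ^ (i + 1) ≠ 1) :
    statPi q χ I (i + 1) * (1 - q ^ (i + 1))
      = statPi q χ I i * (1 - q ^ (-(I : ℤ)) * q ^ i) * χ := by
  have hc : 1 - q ^ (i + 1) ≠ 0 := sub_ne_zero.2 hq.symm
  rw [statPi_succ]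
  field_simp

lemma single_site_balance {α χ ν x y p p' d : ℝ} (hαχ : 1 + α * χ ≠ 0) (hα : 1 + α ≠ 0)
    (hup : p' * (1 - y) = p * (1 - ν * x) * χ) (hdown : χ * d = p * (1 - x) / (1 + α)) :
    (1 / (1 + α * χ)) * (p * (1 + α * x) / (1 + α) + p' * (α * (1 - y)) / (1 + α))
      + (α * χ / (1 + α * χ)) * (p * (α + ν * x) / (1 + α) + d) = p := by
  rw [eq_div_iff hα] at hdown
  field_simp
  linear_combination α * hup + α * hdown

theorem statPi_single_site_stationarity_general (I : ℕ) (q χ α : ℝ) (hq : 1 < q)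
    (hαχ : 0 < 1 + α * χ) (hα : 1 + α ≠ 0) :
    ∀ i : ℕ, i ≤ I →
      (1 / (1 + α * χ)) *
          (statPi q χ I i * (1 + α * q ^ i) / (1 + α)
            + statPi q χ I (i + 1) * (α * (1 - q ^ (i + 1))) / (1 + α))
        + (α * χ / (1 + α * χ)) *
          (statPi q χ I i * (α + q ^ (-(I : ℤ)) * q ^ i) / (1 + α)
            + (if i = 0 then 0 else
                statPi q χ I (i - 1) * (1 - q ^ (-(I : ℤ)) * q ^ (i - 1)) / (1 + α)))
        = statPi q χ I i := by
  intro i _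
  refine single_site_balance hαχ.ne' hα
    (statPi_succ_mul_one_sub_pow q χ I i (one_lt_pow₀ hq i.succ_ne_zero).ne') ?_
  rcases i with _ | j
  · simp
  · rw [if_neg j.succ_ne_zero, Nat.add_sub_cancel,
      statPi_succ_mul_one_sub_pow q χ I j (one_lt_pow₀ hq j.succ_ne_zero).ne']
    ring

/-- **Single-site stationarity of π_ρ for the SHS6V update** (key identity in the proof of
Theorem B.3 of the paper).  Let `q > 1`, `I ≥ 1`, `ν = q^{-I}`, `ρ ∈ (0, I)`, `χ < 0` the
solution of `∑_{i=1}^{I} χ/(χ-qⁱ) = ρ`, and let `α` satisfy `1 + αχ > 0` and `1 + α ≠ 0`.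
If `K ∼ Ber(αχ/(1+αχ))` is independent of `η ∼ π_ρ` and `η` is updated by removing a
particle with probability `α(1-q^η)/(1+α)` when `K = 0`, and by adding a particle with
probability `1 - (α+νq^η)/(1+α)` when `K = 1`, then the updated variable is again
distributed as `π_ρ`: for each `i ∈ {0,…,I}`,
`(1/(1+αχ))[π_ρ(i)(1+αqⁱ)/(1+α) + π_ρ(i+1)α(1-q^{i+1})/(1+α)]
 + (αχ/(1+αχ))[π_ρ(i)(α+νqⁱ)/(1+α) + π_ρ(i-1)(1-νq^{i-1})/(1+α)] = π_ρ(i)`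
(with the convention `π_ρ(-1) = 0`). -/
theorem statPi_single_site_stationarity (I : ℕ) (hI : 1 ≤ I) (q ρ χ α : ℝ) (hq : 1 < q)
    (hρ0 : 0 < ρ) (hρI : ρ < I) (hχ : χ < 0)
    (hχeq : ∑ i ∈ Finset.Icc 1 I, χ / (χ - q ^ i) = ρ)
    (hαχ : 0 < 1 + α * χ) (hα : 1 + α ≠ 0)
    (hK : α * χ / (1 + α * χ) ∈ Set.Ioo (0 : ℝ) 1) :
    ∀ i : ℕ, i ≤ I →
      (1 / (1 + α * χ)) *
          (statPi q χ I i * (1 + α * q ^ i) / (1 + α)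
            + statPi q χ I (i + 1) * (α * (1 - q ^ (i + 1))) / (1 + α))
        + (α * χ / (1 + α * χ)) *
          (statPi q χ I i * (α + q ^ (-(I : ℤ)) * q ^ i) / (1 + α)
            + (if i = 0 then 0 else
                statPi q χ I (i - 1) * (1 - q ^ (-(I : ℤ)) * q ^ (i - 1)) / (1 + α)))
        = statPi q χ I i :=
  statPi_single_site_stationarity_general I q χ α hq hαχ hα
end
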